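/- arXiv:1309.3963 — 4 statements merged into one kernel-verified Lean document; each statement's English description precedes it below -/
import Mathlib

section
/- Let C be a closed disk of radius √2 in the plane, and let Q be a finite set of pairwise non-intersecting closed axis-parallel unit squares each of whose bottom-left corner lies in C. Then Q contains at most eight squares. -/
/-!
Two closed unit squares are disjoint exactly when their anchors are at sup-distance more than 1.
Translate the centre of the disk to the origin and cut `[-3/2, 3/2)²`, which contains the disk,
into nine half-open unit cells: each cell holds at most one anchor, so there are at most nine.
If all nine cells were occupied, the anchors in each outer row and column would spread over more
than 2 in its direction, so the four spreads add up to more than 8. Yet that sum is also the sum of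
`±x ± y` over the four corner anchors, and `x + y ≤ 2` on the disk of radius √2.
-/

/-- The closed axis-parallel unit square with bottom-left corner `p`. -/
def unitSquare (p : ℝ × ℝ) : Set (ℝ × ℝ) :=
  Set.Icc p.1 (p.1 + 1) ×ˢ Set.Icc p.2 (p.2 + 1)

theorem unitSquare_inter_eq_empty_iff {p q : ℝ × ℝ} :
    unitSquare p ∩ unitSquare q = ∅ ↔ 1 < dist p q := by
  simp only [Prod.dist_eq, Real.dist_eq, lt_max_iff]
  constructor
  · intro h
    by_contra! hclose
    rw [abs_le, abs_le] at hclose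
    have hmem : (max p.1 q.1, max p.2 q.2) ∈ unitSquare p ∩ unitSquare q := by
      refine ⟨⟨⟨le_max_left _ _, ?_⟩, ⟨le_max_left _ _, ?_⟩⟩,
        ⟨⟨le_max_right _ _, ?_⟩, ⟨le_max_right _ _, ?_⟩⟩⟩ <;>
      · apply max_le <;> linarith
    simp [h] at hmem
  · intro hfar
    refine Set.eq_empty_of_forall_notMem
      fun _ ⟨⟨⟨hp1, hp1'⟩, hp2, hp2'⟩, ⟨hq1, hq1'⟩, hq2, hq2'⟩ => ?_
    rcases hfar with h | h <;> rw [lt_abs] at h <;> rcases h with h | h <;> linarith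

noncomputable def cellIndex (p : ℝ × ℝ) : ℤ × ℤ :=
  (⌊p.1 + 3 / 2⌋, ⌊p.2 + 3 / 2⌋)

theorem cellIndex_mem_of_sq_add_sq_le_two {p : ℝ × ℝ} (hp : p.1 ^ 2 + p.2 ^ 2 ≤ 2) :
    cellIndex p ∈ Finset.Icc 0 2 ×ˢ Finset.Icc 0 2 := by
  have floor_mem {x : ℝ} (hx : x ^ 2 ≤ 2) : ⌊x + 3 / 2⌋ ∈ Finset.Icc (0 : ℤ) 2 := by
    have hlo : 0 ≤ x + 3 / 2 := by nlinarith
    have hhi : x + 3 / 2 < 3 := by nlinarith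
    rw [Finset.mem_Icc, Int.floor_nonneg, ← Int.lt_add_one_iff, Int.floor_lt]
    exact ⟨hlo, by exact_mod_cast hhi⟩
  exact Finset.mem_product.mpr
    ⟨floor_mem (by nlinarith [sq_nonneg p.2]), floor_mem (by nlinarith [sq_nonneg p.1])⟩

theorem dist_lt_one_of_cellIndex_eq {p q : ℝ × ℝ} (h : cellIndex p = cellIndex q) :
    dist p q < 1 := by
  simp only [cellIndex, Prod.mk.injEq] at h
  have h1 := Int.abs_sub_lt_one_of_floor_eq_floor h.1
  have h2 := Int.abs_sub_lt_one_of_floor_eq_floor h.2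
  rw [Prod.dist_eq, Real.dist_eq, Real.dist_eq, max_lt_iff]
  exact ⟨by simpa using h1, by simpa using h2⟩

theorem one_lt_sub_of_floor_lt {a b u v s : ℝ} (hsep : 1 < max (dist a b) (dist u v))
    (hab : ⌊a + s⌋ < ⌊b + s⌋) (huv : ⌊u + s⌋ = ⌊v + s⌋) : 1 < b - a := by
  have hlt : a < b := by simpa using Int.floor_mono.reflect_lt hab
  have hclose : dist u v < 1 := by
    simpa [Real.dist_eq] using Int.abs_sub_lt_one_of_floor_eq_floor huv
  rw [lt_max_iff, Real.dist_eq, abs_sub_comm, abs_of_pos (sub_pos.mpr hlt)] at hsep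
  exact hsep.resolve_right hclose.not_gt

theorem one_lt_sub_fst_of_cellIndex {p q : ℝ × ℝ} (hpq : 1 < dist p q)
    (h1 : (cellIndex p).1 < (cellIndex q).1) (h2 : (cellIndex p).2 = (cellIndex q).2) :
    1 < q.1 - p.1 :=
  one_lt_sub_of_floor_lt (by rwa [← Prod.dist_eq]) h1 h2

theorem one_lt_sub_snd_of_cellIndex {p q : ℝ × ℝ} (hpq : 1 < dist p q)
    (h1 : (cellIndex p).1 = (cellIndex q).1) (h2 : (cellIndex p).2 < (cellIndex q).2) :
    1 < q.2 - p.2 :=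
  one_lt_sub_of_floor_lt (by rwa [max_comm, ← Prod.dist_eq]) h2 h1

theorem exists_mem_cellIndex_eq {S : Finset (ℝ × ℝ)}
    (hsep : ∀ p ∈ S, ∀ q ∈ S, p ≠ q → 1 < dist p q)
    (hdisk : ∀ p ∈ S, p.1 ^ 2 + p.2 ^ 2 ≤ 2) (hcard : 8 < S.card) :
    ∀ ij ∈ Finset.Icc 0 2 ×ˢ Finset.Icc 0 2, ∃ p ∈ S, cellIndex p = ij := by
  have hsub : S.image cellIndex ⊆ Finset.Icc 0 2 ×ˢ Finset.Icc 0 2 :=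
    Finset.image_subset_iff.mpr fun p hp => cellIndex_mem_of_sq_add_sq_le_two (hdisk p hp)
  have hinj : Set.InjOn cellIndex S := fun p hp q hq h => by
    by_contra hne
    exact (hsep p hp q hq hne).not_gt (dist_lt_one_of_cellIndex_eq h)
  have himage : S.image cellIndex = Finset.Icc 0 2 ×ˢ Finset.Icc 0 2 :=
    Finset.eq_of_subset_of_card_le hsub
      (by simpa [Finset.card_image_of_injOn hinj] using Nat.succ_le_of_lt hcard)
  intro ij hij
  rw [← himage] at hij
  simpa using hij

theorem add_le_two_of_sq_add_sq_le_two {x y : ℝ} (h : x ^ 2 + y ^ 2 ≤ 2) : x + y ≤ 2 := by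
  nlinarith [sq_nonneg (x - 1), sq_nonneg (y - 1)]

theorem card_le_eight_of_one_lt_dist {S : Finset (ℝ × ℝ)}
    (hsep : ∀ p ∈ S, ∀ q ∈ S, p ≠ q → 1 < dist p q)
    (hdisk : ∀ p ∈ S, p.1 ^ 2 + p.2 ^ 2 ≤ 2) : S.card ≤ 8 := by
  by_contra! hcard
  have cell := exists_mem_cellIndex_eq hsep hdisk hcard
  obtain ⟨sw, hsw, hcsw⟩ := cell (0, 0) (by decide)
  obtain ⟨s, hs, hcs⟩ := cell (1, 0) (by decide)
  obtain ⟨se, hse, hcse⟩ := cell (2, 0) (by decide)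
  obtain ⟨w, hw, hcw⟩ := cell (0, 1) (by decide)
  obtain ⟨e, he, hce⟩ := cell (2, 1) (by decide)
  obtain ⟨nw, hnw, hcnw⟩ := cell (0, 2) (by decide)
  obtain ⟨n, hn, hcn⟩ := cell (1, 2) (by decide)
  obtain ⟨ne, hne, hcne⟩ := cell (2, 2) (by decide)
  have east : ∀ p ∈ S, ∀ q ∈ S, (cellIndex p).1 < (cellIndex q).1 →
      (cellIndex p).2 = (cellIndex q).2 → 1 < q.1 - p.1 := fun p hp q hq h1 h2 =>
    one_lt_sub_fst_of_cellIndex (hsep p hp q hq (by rintro rfl; exact h1.false)) h1 h2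
  have north : ∀ p ∈ S, ∀ q ∈ S, (cellIndex p).1 = (cellIndex q).1 →
      (cellIndex p).2 < (cellIndex q).2 → 1 < q.2 - p.2 := fun p hp q hq h1 h2 =>
    one_lt_sub_snd_of_cellIndex (hsep p hp q hq (by rintro rfl; exact h2.false)) h1 h2
  have top : 2 < ne.1 - nw.1 := by
    linarith [east nw hnw n hn (by simp [hcnw, hcn]) (by simp [hcnw, hcn]),
      east n hn ne hne (by simp [hcn, hcne]) (by simp [hcn, hcne])]
  have bottom : 2 < se.1 - sw.1 := by
    linarith [east sw hsw s hs (by simp [hcsw, hcs]) (by simp [hcsw, hcs]),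
      east s hs se hse (by simp [hcs, hcse]) (by simp [hcs, hcse])]
  have left : 2 < nw.2 - sw.2 := by
    linarith [north sw hsw w hw (by simp [hcsw, hcw]) (by simp [hcsw, hcw]),
      north w hw nw hnw (by simp [hcw, hcnw]) (by simp [hcw, hcnw])]
  have right : 2 < ne.2 - se.2 := by
    linarith [north se hse e he (by simp [hcse, hce]) (by simp [hcse, hce]),
      north e he ne hne (by simp [hce, hcne]) (by simp [hce, hcne])]
  linarith [add_le_two_of_sq_add_sq_le_two (hdisk ne hne),
    add_le_two_of_sq_add_sq_le_two (x := -nw.1) (by simpa using hdisk nw hnw),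
    add_le_two_of_sq_add_sq_le_two (y := -se.2) (by simpa using hdisk se hse),
    add_le_two_of_sq_add_sq_le_two (x := -sw.1) (y := -sw.2) (by simpa using hdisk sw hsw)]

/-- A finite set of pairwise non-intersecting closed axis-parallel unit squares,
whose bottom-left corners all lie in a closed disk of radius √2 centered at `c`,
contains at most eight squares. -/
theorem packing_lemma_eight_squares (c : ℝ × ℝ) (Q : Finset (ℝ × ℝ))
    (hC : ∀ p ∈ Q, Real.sqrt ((p.1 - c.1) ^ 2 + (p.2 - c.2) ^ 2) ≤ Real.sqrt 2)
    (hdisj : ∀ p ∈ Q, ∀ q ∈ Q, p ≠ q → unitSquare p ∩ unitSquare q = ∅) :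
    Q.card ≤ 8 := by
  have hsep : ∀ p ∈ Q.image (· - c), ∀ q ∈ Q.image (· - c), p ≠ q → 1 < dist p q := by
    simp only [Finset.forall_mem_image]
    intro p hp q hq hne
    rw [dist_sub_right, ← unitSquare_inter_eq_empty_iff]
    exact hdisj p hp q hq (by rintro rfl; exact hne rfl)
  have hdisk : ∀ p ∈ Q.image (· - c), p.1 ^ 2 + p.2 ^ 2 ≤ 2 := by
    simp only [Finset.forall_mem_image]
    intro p hp
    simpa [Real.sqrt_le_sqrt_iff] using hC p hp
  simpa [Finset.card_image_of_injective Q sub_left_injective] using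
    card_le_eight_of_one_lt_dist hsep hdisk
end

section
/- Let C be a closed disk of radius √2 in the plane and let Q' be a finite set of pairwise non-intersecting closed axis-parallel unit squares each of whose bottom-left corner lies in C. If there exists a vertical line that intersects every square of Q', then Q' contains at most three squares. -/
theorem Finset.card_sub_one_mul_le_of_le_abs_sub {α : Type*} [CommRing α] [LinearOrder α]
    [IsStrictOrderedRing α] {S : Finset α} {a b d : α} (hS : ∀ x ∈ S, x ∈ Set.Icc a b)
    (hsep : ∀ x ∈ S, ∀ y ∈ S, x ≠ y → d ≤ |x - y|) (hne : S.Nonempty) :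
    ((S.card : α) - 1) * d ≤ b - a := by
  induction S using Finset.induction_on_max generalizing b with
  | empty => exact absurd hne Finset.not_nonempty_empty
  | insert x s hlt ih =>
    have hx : x ∈ Set.Icc a b := hS x (Finset.mem_insert_self x s)
    rw [Finset.card_insert_of_notMem fun h => (hlt x h).false]
    rcases s.eq_empty_or_nonempty with rfl | hs
    · simpa using hx.1.trans hx.2
    have hs_le : ∀ y ∈ s, y ∈ Set.Icc a (x - d) := fun y hy => by
      have hgap := hsep x (Finset.mem_insert_self x s) y (Finset.mem_insert_of_mem hy)
        (hlt y hy).ne'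
      rw [abs_of_pos (sub_pos.2 (hlt y hy))] at hgap
      exact ⟨(hS y (Finset.mem_insert_of_mem hy)).1, by linarith⟩
    have hs_sep : ∀ y ∈ s, ∀ z ∈ s, y ≠ z → d ≤ |y - z| := fun y hy z hz =>
      hsep y (Finset.mem_insert_of_mem hy) z (Finset.mem_insert_of_mem hz)
    have := ih hs_le hs_sep hs
    push_cast
    linarith [hx.2, show ((s.card : α) + 1 - 1) * d = ((s.card : α) - 1) * d + d by ring]

theorem one_lt_abs_sub_snd_of_unitSquare_inter_eq_empty {p q : ℝ × ℝ} {x y y' : ℝ}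
    (hp : (x, y) ∈ unitSquare p) (hq : (x, y') ∈ unitSquare q)
    (h : unitSquare p ∩ unitSquare q = ∅) : 1 < |p.2 - q.2| := by
  by_contra! hle
  rw [abs_sub_le_iff] at hle
  have hmem : (x, max p.2 q.2) ∈ unitSquare p ∩ unitSquare q :=
    ⟨⟨hp.1, le_max_left _ _, max_le (by linarith [hp.2.2]) (by linarith [hq.2.2])⟩,
      ⟨hq.1, le_max_right _ _, max_le (by linarith [hp.2.2]) (by linarith [hq.2.2])⟩⟩
  simp [h] at hmem

theorem snd_mem_Icc_of_sqrt_le {p c : ℝ × ℝ} {r : ℝ} (hr : 0 ≤ r)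
    (h : Real.sqrt ((p.1 - c.1) ^ 2 + (p.2 - c.2) ^ 2) ≤ Real.sqrt r) :
    p.2 ∈ Set.Icc (c.2 - Real.sqrt r) (c.2 + Real.sqrt r) :=
  Set.mem_Icc_iff_abs_le.1 <| Real.abs_le_sqrt <| by
    nlinarith [(Real.sqrt_le_sqrt_iff hr).1 h, sq_nonneg (p.1 - c.1)]

/-- A finite set of pairwise non-intersecting closed axis-parallel unit squares,
with bottom-left corners in a closed disk of radius √2 centered at `c`, all of
which are stabbed by a common vertical line, contains at most three squares. -/
theorem stabbed_squares_at_most_three (c : ℝ × ℝ) (Q : Finset (ℝ × ℝ))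
    (hC : ∀ p ∈ Q, Real.sqrt ((p.1 - c.1) ^ 2 + (p.2 - c.2) ^ 2) ≤ Real.sqrt 2)
    (hdisj : ∀ p ∈ Q, ∀ q ∈ Q, p ≠ q → unitSquare p ∩ unitSquare q = ∅)
    (hline : ∃ x : ℝ, ∀ p ∈ Q, ∃ y : ℝ, (x, y) ∈ unitSquare p) :
    Q.card ≤ 3 := by
  obtain ⟨x, hx⟩ := hline
  have hsep : ∀ p ∈ Q, ∀ q ∈ Q, p ≠ q → 1 < |p.2 - q.2| := fun p hp q hq hne =>
    one_lt_abs_sub_snd_of_unitSquare_inter_eq_empty (hx p hp).choose_spec (hx q hq).choose_spec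
      (hdisj p hp q hq hne)
  have hinj : Set.InjOn Prod.snd (Q : Set (ℝ × ℝ)) := fun p hp q hq h => by
    by_contra hne
    exact (hsep p hp q hq hne).not_ge (by simp [h])
  rcases Q.eq_empty_or_nonempty with rfl | hQ
  · simp
  have hpack := Finset.card_sub_one_mul_le_of_le_abs_sub (S := Q.image Prod.snd) (d := 1)
    (Finset.forall_mem_image.2 fun p hp => snd_mem_Icc_of_sqrt_le zero_le_two (hC p hp))
    (Finset.forall_mem_image.2 fun p hp => Finset.forall_mem_image.2 fun q hq hne =>
      (hsep p hp q hq (fun h => hne (congrArg Prod.snd h))).le)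
    (hQ.image _)
  rw [Finset.card_image_of_injOn hinj] at hpack
  have hsqrt : Real.sqrt 2 < 3 / 2 := by
    rw [Real.sqrt_lt' (by norm_num)]
    norm_num
  have hcard : (Q.card : ℝ) < 4 := by linarith
  exact_mod_cast Nat.lt_succ_iff.mp (by exact_mod_cast hcard)
end

section
/- Let ℓ be a closed axis-parallel unit square with bottom-left corner p, and let Q be a finite set of pairwise non-intersecting closed axis-parallel unit squares each of which has non-empty intersection with ℓ. Then Q contains at most eight squares. -/
/-!
Two closed unit squares meet exactly when their anchors differ by at most `1` in both
coordinates. So the anchors of the squares of `Q` lie in `p + [-1, 1]²`, and two anchors in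
the same quadrant `{x ≤ p.1} / {x > p.1} × {y ≤ p.2} / {y > p.2}` differ by at most `1` in
both coordinates, i.e. their squares meet. Disjoint squares therefore sit in distinct
quadrants, and `Q` has in fact at most four elements.
-/

open Set

lemma Icc_inter_Icc_add_nonempty_iff (a b d : ℝ) :
    (Icc a (a + d) ∩ Icc b (b + d)).Nonempty ↔ |a - b| ≤ d := by
  rw [Icc_inter_Icc, nonempty_Icc, abs_sub_le_iff, max_le_iff, le_min_iff, le_min_iff]
  constructor
  · rintro ⟨⟨-, hba⟩, hab, -⟩
    constructor <;> linarith
  · rintro ⟨hab, hba⟩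
    refine ⟨⟨?_, ?_⟩, ?_, ?_⟩ <;> linarith

lemma unitSquare_inter_nonempty_iff (q r : ℝ × ℝ) :
    (unitSquare q ∩ unitSquare r).Nonempty ↔ |q.1 - r.1| ≤ 1 ∧ |q.2 - r.2| ≤ 1 := by
  rw [unitSquare, unitSquare, prod_inter_prod, prod_nonempty_iff,
    Icc_inter_Icc_add_nonempty_iff, Icc_inter_Icc_add_nonempty_iff]

lemma abs_sub_le_of_le_iff_le {a b c d : ℝ} (ha : |a - c| ≤ d) (hb : |b - c| ≤ d)
    (hside : a ≤ c ↔ b ≤ c) : |a - b| ≤ d := by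
  rw [abs_sub_le_iff] at ha hb ⊢
  rcases le_or_gt a c with hac | hca
  · have hbc := hside.1 hac
    constructor <;> linarith
  · have hcb : c < b := lt_of_not_ge fun hbc => hca.not_ge (hside.2 hbc)
    constructor <;> linarith

lemma card_le_four_of_inter_nonempty_of_disjoint (p : ℝ × ℝ) (Q : Finset (ℝ × ℝ))
    (hmeet : ∀ q ∈ Q, (unitSquare q ∩ unitSquare p).Nonempty)
    (hdisj : ∀ q ∈ Q, ∀ r ∈ Q, q ≠ r → unitSquare q ∩ unitSquare r = ∅) :
    Q.card ≤ 4 := by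
  let quadrant : ℝ × ℝ → Bool × Bool := fun q => (decide (q.1 ≤ p.1), decide (q.2 ≤ p.2))
  have hinj : InjOn quadrant Q := by
    intro q hq r hr hqr
    by_contra hne
    simp only [quadrant, Prod.mk.injEq, decide_eq_decide] at hqr
    obtain ⟨hq1, hq2⟩ := (unitSquare_inter_nonempty_iff q p).1 (hmeet q hq)
    obtain ⟨hr1, hr2⟩ := (unitSquare_inter_nonempty_iff r p).1 (hmeet r hr)
    have hmeet_qr : (unitSquare q ∩ unitSquare r).Nonempty :=
      (unitSquare_inter_nonempty_iff q r).2
        ⟨abs_sub_le_of_le_iff_le hq1 hr1 hqr.1, abs_sub_le_of_le_iff_le hq2 hr2 hqr.2⟩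
    exact hmeet_qr.ne_empty (hdisj q hq r hr hne)
  simpa using Finset.card_le_card_of_injOn quadrant (fun q _ => Finset.mem_univ _) hinj

/-- A finite set of pairwise non-intersecting closed axis-parallel unit squares,
each of which intersects a fixed closed axis-parallel unit square with
bottom-left corner `p`, contains at most eight squares. -/
theorem at_most_eight_squares_meeting_a_square (p : ℝ × ℝ) (Q : Finset (ℝ × ℝ))
    (hmeet : ∀ q ∈ Q, (unitSquare q ∩ unitSquare p).Nonempty)
    (hdisj : ∀ q ∈ Q, ∀ r ∈ Q, q ≠ r → unitSquare q ∩ unitSquare r = ∅) :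
    Q.card ≤ 8 :=
  (card_le_four_of_inter_nonempty_of_disjoint p Q hmeet hdisj).trans (by norm_num)
end

section
/- Let S be a finite set of closed intervals of real numbers such that no real number is contained in more than k intervals of S. Then there is a partition of S into k sets M₁, …, M_k such that no two intersecting intervals are in the same set M_i, i.e., within each M_i the intervals are pairwise disjoint. -/
/-!
Colour the intervals greedily, always removing the interval `I₀` with the largest left endpoint
and colouring it last. Every interval meeting `I₀` must then contain the point `I₀.1`, so together
with `I₀` they are at most `k` intervals through one point: fewer than `k` colours are blocked
when `I₀` is coloured.
-/

open scoped Classical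

open Finset

section GreedyColoring

variable {α : Type*} {r : α → α → Prop} [DecidableEq α] [Std.Symm r] {k : ℕ}

/-- Colours are natural numbers below `k` rather than elements of `Fin k`, so that the empty set
can be coloured even when `k = 0`. -/
theorem exists_coloring_lt_of_forall_exists_few_neighbors (s : Finset α)
    (hdeg : ∀ t ⊆ s, t.Nonempty → ∃ a ∈ t, #{b ∈ t.erase a | r a b} < k) :
    ∃ f : α → ℕ, (∀ a ∈ s, f a < k) ∧ ∀ a ∈ s, ∀ b ∈ s, a ≠ b → r a b → f a ≠ f b := by
  induction s using Finset.strongInduction with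
  | _ s ih =>
  rcases s.eq_empty_or_nonempty with rfl | hs
  · exact ⟨0, by simp, by simp⟩
  obtain ⟨a, ha, hfew⟩ := hdeg s subset_rfl hs
  obtain ⟨f, hf_lt, hf_proper⟩ := ih (s.erase a) (erase_ssubset ha)
    fun t ht => hdeg t (ht.trans (erase_subset a s))
  obtain ⟨c, hc_lt, hc_free⟩ : ∃ c ∈ range k, c ∉ image f {b ∈ s.erase a | r a b} :=
    exists_mem_notMem_of_card_lt_card ((card_image_le.trans_lt hfew).trans_eq (card_range k).symm)
  have hc : ∀ b ∈ s.erase a, r a b → c ≠ f b := fun b hb hab hcb =>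
    hc_free (mem_image.mpr ⟨b, mem_filter.mpr ⟨hb, hab⟩, hcb.symm⟩)
  refine ⟨Function.update f a c, fun b hb => ?_, fun b hb b' hb' hbb' hr' => ?_⟩
  · rcases eq_or_ne b a with rfl | hba
    · simpa using hc_lt
    · simpa [hba] using hf_lt b (mem_erase.mpr ⟨hba, hb⟩)
  by_cases hba : b = a <;> by_cases hb'a : b' = a
  · exact absurd (hba.trans hb'a.symm) hbb'
  · subst hba
    simpa [hb'a] using hc b' (mem_erase.mpr ⟨hb'a, hb'⟩) hr'
  · subst hb'a
    simpa [hba] using (hc b (mem_erase.mpr ⟨hba, hb⟩) (Std.Symm.symm _ _ hr')).symm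
  · simpa [hba, hb'a] using
      hf_proper b (mem_erase.mpr ⟨hba, hb⟩) b' (mem_erase.mpr ⟨hb'a, hb'⟩) hbb' hr'

end GreedyColoring

section Intervals

variable {α : Type*} [LinearOrder α]

def IntervalsMeet (I J : α × α) : Prop :=
  (Set.Icc I.1 I.2 ∩ Set.Icc J.1 J.2).Nonempty

instance : Std.Symm (IntervalsMeet (α := α)) :=
  ⟨fun I J h => by rwa [IntervalsMeet, Set.inter_comm]⟩

theorem IntervalsMeet.left_mem_of_fst_le {I J : α × α} (h : IntervalsMeet I J) (hle : J.1 ≤ I.1) :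
    I.1 ∈ Set.Icc J.1 J.2 := by
  obtain ⟨x, hxI, hxJ⟩ := h
  exact ⟨hle, hxI.1.trans hxJ.2⟩

theorem exists_card_filter_intervalsMeet_lt {k : ℕ} {S : Finset (α × α)} (hS : ∀ I ∈ S, I.1 ≤ I.2)
    (hdepth : ∀ t : α, #{I ∈ S | t ∈ Set.Icc I.1 I.2} ≤ k) :
    ∀ T ⊆ S, T.Nonempty → ∃ I ∈ T, #{J ∈ T.erase I | IntervalsMeet I J} < k := by
  intro T hTS hT
  obtain ⟨I, hIT, hI_max⟩ := T.exists_max_image Prod.fst hT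
  refine ⟨I, hIT, ?_⟩
  have hsub : {J ∈ T.erase I | IntervalsMeet I J} ⊆ {J ∈ S | I.1 ∈ Set.Icc J.1 J.2}.erase I :=
    fun J hJ => by
      obtain ⟨hJI, hJT⟩ := mem_erase.mp (mem_filter.mp hJ).1
      exact mem_erase.mpr ⟨hJI, mem_filter.mpr ⟨hTS hJT,
        (mem_filter.mp hJ).2.left_mem_of_fst_le (hI_max J hJT)⟩⟩
  calc #{J ∈ T.erase I | IntervalsMeet I J}
      ≤ #({J ∈ S | I.1 ∈ Set.Icc J.1 J.2}.erase I) := card_le_card hsub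
    _ < #{J ∈ S | I.1 ∈ Set.Icc J.1 J.2} :=
        card_erase_lt_of_mem (mem_filter.mpr ⟨hTS hIT, le_rfl, hS I (hTS hIT)⟩)
    _ ≤ k := hdepth I.1

end Intervals

/-- If no real number is contained in more than `k` intervals of a finite set `S`
of closed intervals (each interval given by its pair of endpoints `I = (I.1, I.2)`
with `I.1 ≤ I.2`), then `S` can be partitioned into `k` classes (a coloring by
`Fin k`) such that intervals in the same class are pairwise disjoint. -/
theorem partition_into_k_disjoint_families (k : ℕ) (S : Finset (ℝ × ℝ))
    (hS : ∀ I ∈ S, I.1 ≤ I.2)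
    (hdepth : ∀ t : ℝ, (S.filter fun I => t ∈ Set.Icc I.1 I.2).card ≤ k) :
    ∃ f : {I : ℝ × ℝ // I ∈ S} → Fin k,
      ∀ I J : {I : ℝ × ℝ // I ∈ S}, I ≠ J → f I = f J →
        Set.Icc I.val.1 I.val.2 ∩ Set.Icc J.val.1 J.val.2 = ∅ := by
  obtain ⟨f, hf_lt, hf_proper⟩ := exists_coloring_lt_of_forall_exists_few_neighbors S
    (exists_card_filter_intervalsMeet_lt hS hdepth)
  refine ⟨fun I => ⟨f I, hf_lt I I.2⟩, fun I J hIJ hfIJ => ?_⟩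
  by_contra hmeet
  exact hf_proper I I.2 J J.2 (Subtype.coe_ne_coe.mpr hIJ) (Set.nonempty_iff_ne_empty.mpr hmeet)
    (Fin.ext_iff.mp hfIJ)
end
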